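/- In dimension d ≥ 2, the periodic bilinear X^{s,b} estimate ‖u₁u₂‖_{X^+_{s,b'}} ≤ c‖u₁‖_{X^+_{s,b}}‖u₂‖_{X^+_{s,b}} fails for every s < 0 and all b, b' ∈ ℝ. Concretely: fixing orthonormal e₁, e₂ ∈ ℝ^d and setting f_1^{(n)}(ξ,τ) = δ_{ξ, n e₁} χ_{[-1,1]}(τ + n²), f_2^{(n)}(ξ,τ) = δ_{ξ, n e₂} χ_{[-1,1]}(τ + n²), the convolution satisfies (f_1^{(n)} * f_2^{(n)})(ξ,τ) ≥ δ_{ξ, n(e₁+e₂)} χ_{[-1,1]}(τ + 2n²), which forces the quantity n^{-s} to remain bounded in n, a contradiction for s < 0. -/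

import Mathlib

open MeasureTheory
open scoped ENNReal BigOperators

/-- Japanese bracket. -/
noncomputable def jb (x : ℝ) : ℝ := Real.sqrt (1 + x ^ 2)

/-- `|ξ|²` for `ξ ∈ ℤ^d`. -/
def nsq {d : ℕ} (ξ : Fin d → ℤ) : ℝ := ∑ i, ((ξ i : ℝ)) ^ 2

/-- Japanese bracket of `ξ ∈ ℤ^d`. -/
noncomputable def jbZ {d : ℕ} (ξ : Fin d → ℤ) : ℝ := Real.sqrt (1 + nsq ξ)

/-- The `X^+_{s,b}` norm on the (space-time) Fourier side: counting measure in `ξ ∈ ℤ^d`,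
Lebesgue measure in `τ`, with weight `⟨ξ⟩^s ⟨τ+|ξ|²⟩^b`. -/
noncomputable def Xnorm (d : ℕ) (s b : ℝ) (F : (Fin d → ℤ) × ℝ → ℝ≥0∞) : ℝ≥0∞ :=
  (∑' ξ : Fin d → ℤ, ∫⁻ τ : ℝ,
      ENNReal.ofReal (jbZ ξ ^ (2 * s) * jb (τ + nsq ξ) ^ (2 * b)) * F (ξ, τ) ^ 2) ^
    ((1 : ℝ) / 2)

/-- Convolution on `ℤ^d × ℝ`, corresponding to the product `u₁u₂` on the Fourier side. -/
noncomputable def conv2 (d : ℕ) (F G : (Fin d → ℤ) × ℝ → ℝ≥0∞) :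
    (Fin d → ℤ) × ℝ → ℝ≥0∞ := fun p =>
  ∑' ξ₁ : Fin d → ℤ, ∫⁻ τ₁ : ℝ, F (ξ₁, τ₁) * G (p.1 - ξ₁, p.2 - τ₁)

/-- First standard basis vector of `ℤ^d`. -/
def e₀ (d : ℕ) : Fin d → ℤ := fun i => if i.val = 0 then 1 else 0

/-- Second standard basis vector of `ℤ^d`. -/
def e₁ (d : ℕ) : Fin d → ℤ := fun i => if i.val = 1 then 1 else 0

/-- The counterexample sequence `f₁^{(n)}(ξ,τ) = δ_{ξ, n e₀} χ_{[-1,1]}(τ + n²)`,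
for a general direction `e`. -/
noncomputable def fex (d n : ℕ) (e : Fin d → ℤ) : (Fin d → ℤ) × ℝ → ℝ≥0∞ := fun p =>
  (if p.1 = (n : ℤ) • e then 1 else 0) *
    (if p.2 + (n : ℝ) ^ 2 ∈ Set.Icc (-1 : ℝ) 1 then 1 else 0)

/-!
Write `slab v t` for `δ_{ξ,v} χ_{[-1,1]}(τ + t)`. Since for `|a| ≤ 1` the set of `σ` with
`|σ| ≤ 1` and `|a - σ| ≤ 1` contains an interval of length one, the convolution of
`slab v₁ t₁` and `slab v₂ t₂` dominates `slab (v₁ + v₂) (t₁ + t₂)`. A slab with `t = |v|²` sits on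
the paraboloid, so its squared `X^+_{s,b}` norm is `⟨v⟩^{2s} ∫_{-1}^{1} ⟨u⟩^{2b} du`. For the
orthogonal frequencies `n e₀`, `n e₁` the sum `n (e₀ + e₁)` again lies on the paraboloid, and the
estimate would give `(1 + 2n²)^s ≲ (1 + n²)^{2s}`, i.e. `(1 + n²)^{-s}` bounded, which fails for
`s < 0`.
-/

open Set Filter Topology

section
variable {d : ℕ}

lemma nsq_smul (k : ℤ) (ξ : Fin d → ℤ) : nsq (k • ξ) = (k : ℝ) ^ 2 * nsq ξ := by
  simp only [nsq, Finset.mul_sum, Pi.smul_apply, smul_eq_mul, Int.cast_mul, mul_pow]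

lemma nsq_e₀ (hd : 0 < d) : nsq (e₀ d) = 1 := by
  simp only [nsq, e₀]
  rw [Finset.sum_eq_single ⟨0, hd⟩] <;> simp [Fin.ext_iff]

lemma nsq_e₁ (hd : 1 < d) : nsq (e₁ d) = 1 := by
  simp only [nsq, e₁]
  rw [Finset.sum_eq_single ⟨1, hd⟩] <;> simp [Fin.ext_iff]

lemma nsq_e₀_add_e₁ (hd : 1 < d) : nsq (e₀ d + e₁ d) = 2 := by
  obtain ⟨m, rfl⟩ : ∃ m, d = m + 2 := ⟨d - 2, by omega⟩
  norm_num [nsq, e₀, e₁, Fin.sum_univ_succ]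

noncomputable def slab (v : Fin d → ℤ) (t : ℝ) : (Fin d → ℤ) × ℝ → ℝ≥0∞ := fun p =>
  (if p.1 = v then 1 else 0) * (if p.2 + t ∈ Icc (-1 : ℝ) 1 then 1 else 0)

lemma fex_eq_slab (n : ℕ) (e : Fin d → ℤ) : fex d n e = slab ((n : ℤ) • e) ((n : ℝ) ^ 2) := rfl

lemma measurable_slab (v : Fin d → ℤ) (t : ℝ) : Measurable (slab v t) :=
  (Measurable.ite (measurable_fst (measurableSet_singleton v)) measurable_const
    measurable_const).mul
  (Measurable.ite ((measurable_snd.add_const t) measurableSet_Icc) measurable_const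
    measurable_const)

lemma slab_le_conv2 {v₁ v₂ v : Fin d → ℤ} {t₁ t₂ t : ℝ} (hv : v₁ + v₂ = v) (ht : t₁ + t₂ = t) :
    slab v t ≤ conv2 d (slab v₁ t₁) (slab v₂ t₂) := by
  rintro ⟨ξ, τ⟩
  by_cases h : ξ = v ∧ τ + t ∈ Icc (-1 : ℝ) 1
  swap
  · rw [not_and_or] at h
    rcases h with h | h <;> simp [slab, h]
  obtain ⟨rfl, ha⟩ := h
  calc slab ξ t (ξ, τ) = volume (Icc ((τ + t - 1) / 2 - t₁) ((τ + t + 1) / 2 - t₁)) := by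
        rw [Real.volume_Icc, show (τ + t + 1) / 2 - t₁ - ((τ + t - 1) / 2 - t₁) = 1 by ring]
        simp [slab, ha]
    _ = ∫⁻ τ₁, (Icc ((τ + t - 1) / 2 - t₁) ((τ + t + 1) / 2 - t₁)).indicator 1 τ₁ :=
        (lintegral_indicator_one measurableSet_Icc).symm
    _ ≤ ∫⁻ τ₁, slab v₁ t₁ (v₁, τ₁) * slab v₂ t₂ (ξ - v₁, τ - τ₁) := by
        refine lintegral_mono (indicator_le fun τ₁ hτ₁ => ?_)
        -- `σ = τ₁ + t₁` ranges over a subinterval of `[-1, 1]` invariant under `σ ↦ τ + t - σ`.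
        have h₁ : τ₁ + t₁ ∈ Icc (-1 : ℝ) 1 := by
          constructor <;> linarith [hτ₁.1, hτ₁.2, ha.1, ha.2]
        have h₂ : τ - τ₁ + t₂ ∈ Icc (-1 : ℝ) 1 := by
          constructor <;> linarith [hτ₁.1, hτ₁.2, ha.1, ha.2]
        simp [slab, h₁, h₂, ← hv]
    _ ≤ conv2 d (slab v₁ t₁) (slab v₂ t₂) (ξ, τ) := ENNReal.le_tsum v₁

lemma one_le_jb (x : ℝ) : 1 ≤ jb x :=
  Real.one_le_sqrt.2 (le_add_of_nonneg_right (sq_nonneg x))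

lemma continuous_jb_rpow (b : ℝ) : Continuous fun x => jb x ^ b :=
  (Real.continuous_sqrt.comp (continuous_const.add (continuous_pow 2))).rpow_const
    fun x => Or.inl (zero_lt_one.trans_le (one_le_jb x)).ne'

lemma jbZ_rpow (ξ : Fin d → ℤ) (s : ℝ) : jbZ ξ ^ (2 * s) = (1 + nsq ξ) ^ s := by
  have h : 0 ≤ 1 + nsq ξ := add_nonneg zero_le_one (Finset.sum_nonneg fun i _ => sq_nonneg _)
  rw [jbZ, Real.sqrt_eq_rpow, ← Real.rpow_mul h]
  ring_nf

noncomputable def jbIntegral (b : ℝ) : ℝ := ∫ u in Icc (-1 : ℝ) 1, jb u ^ (2 * b)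

lemma jbIntegral_pos (b : ℝ) : 0 < jbIntegral b := by
  have hpos : ∀ u, 0 < jb u ^ (2 * b) :=
    fun u => Real.rpow_pos_of_pos (zero_lt_one.trans_le (one_le_jb u)) _
  rw [jbIntegral, setIntegral_pos_iff_support_of_nonneg_ae
    (ae_of_all _ fun u => (hpos u).le) (continuous_jb_rpow _).integrableOn_Icc,
    Function.support_eq_univ fun u => (hpos u).ne', univ_inter, Real.volume_Icc]
  norm_num

lemma Xnorm_sq (s b : ℝ) (F : (Fin d → ℤ) × ℝ → ℝ≥0∞) :
    Xnorm d s b F ^ 2 = ∑' ξ : Fin d → ℤ, ∫⁻ τ : ℝ,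
      ENNReal.ofReal (jbZ ξ ^ (2 * s) * jb (τ + nsq ξ) ^ (2 * b)) * F (ξ, τ) ^ 2 := by
  rw [Xnorm, ← ENNReal.rpow_natCast, ← ENNReal.rpow_mul]
  norm_num

lemma Xnorm_mono {s b : ℝ} {F G : (Fin d → ℤ) × ℝ → ℝ≥0∞} (h : F ≤ G) :
    Xnorm d s b F ≤ Xnorm d s b G := by
  unfold Xnorm
  gcongr with ξ τ
  exact h _

lemma Xnorm_sq_slab (s b : ℝ) (v : Fin d → ℤ) :
    Xnorm d s b (slab v (nsq v)) ^ 2 = ENNReal.ofReal ((1 + nsq v) ^ s * jbIntegral b) := by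
  rw [Xnorm_sq, tsum_eq_single v fun ξ hξ => by simp [slab, hξ]]
  set f : ℝ → ℝ := fun u => jbZ v ^ (2 * s) * jb u ^ (2 * b)
  have hf : Continuous f := continuous_const.mul (continuous_jb_rpow _)
  have hf_nonneg : ∀ u, 0 ≤ f u := fun u =>
    mul_nonneg (Real.rpow_nonneg (Real.sqrt_nonneg _) _)
      (Real.rpow_nonneg (zero_le_one.trans (one_le_jb u)) _)
  calc ∫⁻ τ, ENNReal.ofReal (f (τ + nsq v)) * slab v (nsq v) (v, τ) ^ 2
      = ∫⁻ τ, (Icc (-1 : ℝ) 1).indicator (fun u => ENNReal.ofReal (f u)) (τ + nsq v) := by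
        congr with τ
        by_cases h : τ + nsq v ∈ Icc (-1 : ℝ) 1 <;> simp [slab, h]
    _ = ∫⁻ u in Icc (-1 : ℝ) 1, ENNReal.ofReal (f u) := by
        rw [lintegral_add_right_eq_self (fun u => (Icc (-1 : ℝ) 1).indicator _ u),
          lintegral_indicator measurableSet_Icc]
    _ = ENNReal.ofReal (∫ u in Icc (-1 : ℝ) 1, f u) :=
        (ofReal_integral_eq_lintegral_ofReal hf.integrableOn_Icc (ae_of_all _ hf_nonneg)).symm
    _ = ENNReal.ofReal ((1 + nsq v) ^ s * jbIntegral b) := by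
        rw [integral_const_mul, jbZ_rpow, jbIntegral]

lemma not_forall_one_add_two_mul_sq_rpow_le {s a C : ℝ} (hs : s < 0) (ha : 0 < a) :
    ¬ ∀ n : ℕ, (1 + 2 * (n : ℝ) ^ 2) ^ s * a ≤ C * ((1 + (n : ℝ) ^ 2) ^ s) ^ 2 := by
  intro h
  have hlim : Tendsto (fun n : ℕ => C * (1 + (n : ℝ) ^ 2) ^ s) atTop (𝓝 0) := by
    have h₀ := (tendsto_rpow_neg_atTop (neg_pos.2 hs)).comp <|
      tendsto_atTop_add_const_left _ 1 <|
        (tendsto_pow_atTop two_ne_zero).comp tendsto_natCast_atTop_atTop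
    simpa using h₀.const_mul C
  obtain ⟨n, hn⟩ := (hlim.eventually_lt_const (by positivity : 0 < 2 ^ s * a)).exists
  set y := (1 + (n : ℝ) ^ 2) ^ s
  have hy : 0 < y := by positivity
  have hcmp : 2 ^ s * y ≤ (1 + 2 * (n : ℝ) ^ 2) ^ s := by
    rw [← Real.mul_rpow zero_le_two (by positivity)]
    exact Real.rpow_le_rpow_of_nonpos (by positivity) (by linarith) hs.le
  nlinarith [h n, mul_le_mul_of_nonneg_right hcmp ha.le]

lemma not_bilinear_estimate (hd : 2 ≤ d) {s : ℝ} (hs : s < 0) (b b' : ℝ) :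
    ¬ ∃ c : ℝ, 0 < c ∧ ∀ F G : (Fin d → ℤ) × ℝ → ℝ≥0∞,
      Measurable F → Measurable G →
      Xnorm d s b' (conv2 d F G) ≤ ENNReal.ofReal c * Xnorm d s b F * Xnorm d s b G := by
  rintro ⟨c, hc, hest⟩
  refine not_forall_one_add_two_mul_sq_rpow_le hs (jbIntegral_pos b')
    (C := (c * jbIntegral b) ^ 2) fun n => ?_
  set v₀ := (n : ℤ) • e₀ d
  set v₁ := (n : ℤ) • e₁ d
  have hv₀ : nsq v₀ = (n : ℝ) ^ 2 := by
    rw [nsq_smul, nsq_e₀ (by omega), Int.cast_natCast, mul_one]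
  have hv₁ : nsq v₁ = (n : ℝ) ^ 2 := by
    rw [nsq_smul, nsq_e₁ (by omega), Int.cast_natCast, mul_one]
  have hv : nsq (v₀ + v₁) = 2 * (n : ℝ) ^ 2 := by
    rw [← smul_add, nsq_smul, nsq_e₀_add_e₁ (by omega)]
    push_cast
    ring
  have hconv : slab (v₀ + v₁) (nsq (v₀ + v₁)) ≤ conv2 d (slab v₀ (nsq v₀)) (slab v₁ (nsq v₁)) :=
    slab_le_conv2 rfl (by rw [hv, hv₀, hv₁]; ring)
  have h := pow_le_pow_left' ((Xnorm_mono (s := s) (b := b') hconv).trans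
    (hest _ _ (measurable_slab _ _) (measurable_slab _ _))) 2
  have hκ := jbIntegral_pos b
  rw [mul_pow, mul_pow, Xnorm_sq_slab, Xnorm_sq_slab, Xnorm_sq_slab, hv, hv₀, hv₁,
    ← ENNReal.ofReal_pow hc.le, ← ENNReal.ofReal_mul (by positivity),
    ← ENNReal.ofReal_mul (by positivity), ENNReal.ofReal_le_ofReal_iff (by positivity)] at h
  linarith

end

/-- In dimension `d ≥ 2` the periodic bilinear estimate
`‖u₁u₂‖_{X^+_{s,b'}} ≤ c ‖u₁‖_{X^+_{s,b}} ‖u₂‖_{X^+_{s,b}}` fails for every `s < 0` and all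
`b, b'`. Concretely, the convolutions of `f₁^{(n)}, f₂^{(n)}` dominate
`δ_{ξ, n(e₀+e₁)} χ_{[-1,1]}(τ + 2n²)`, which forces `n^{-s}` to stay bounded. -/
theorem periodic_bilinear_failure (d : ℕ) (hd : 2 ≤ d) :
    (∀ n : ℕ, ∀ p : (Fin d → ℤ) × ℝ,
      (if p.1 = (n : ℤ) • (e₀ d + e₁ d) then 1 else 0) *
          (if p.2 + 2 * (n : ℝ) ^ 2 ∈ Set.Icc (-1 : ℝ) 1 then 1 else 0) ≤
        conv2 d (fex d n (e₀ d)) (fex d n (e₁ d)) p) ∧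
    ∀ s : ℝ, s < 0 → ∀ b b' : ℝ,
      ¬ ∃ c : ℝ, 0 < c ∧ ∀ F G : (Fin d → ℤ) × ℝ → ℝ≥0∞,
        Measurable F → Measurable G →
        Xnorm d s b' (conv2 d F G) ≤ ENNReal.ofReal c * Xnorm d s b F * Xnorm d s b G :=
  ⟨fun n => by
    rw [fex_eq_slab, fex_eq_slab]
    exact slab_le_conv2 (smul_add _ _ _).symm (two_mul _).symm,
    fun _ hs b b' => not_bilinear_estimate hd hs b b'⟩
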